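/- Assume (A1), and fix t ∈ {0,1}. Then for every bounded measurable function τ† : 𝒳 → ℝ, the influence-function expression for ν_t has mean zero regardless of whether τ† equals the true outcome regression: E[ (R/λ₁)·( 1{T=t}·Y / π_{t1} + (1 − 1{T=t} / π_{t1})·τ†(X) − ν_t ) ] = 0. -/

import Mathlib

open MeasureTheory ProbabilityTheory Set

noncomputable section

/-- The σ-algebra on `Ω` generated by the map `X`. -/
def sigmaX {Ω 𝒳 : Type*} [MeasurableSpace 𝒳] (X : Ω → 𝒳) : MeasurableSpace Ω :=
  MeasurableSpace.comap X inferInstance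

/-- Conditional expectation of `f` given the σ-algebra `m'` under the measure `μ`. -/
def cexp {Ω : Type*} (m' : MeasurableSpace Ω) {m0 : MeasurableSpace Ω} (μ : Measure Ω)
    (f : Ω → ℝ) : Ω → ℝ :=
  MeasureTheory.condExp m' μ f

/-- Conditional probability of the event `s` given the σ-algebra `m'`, as a function. -/
def cprob {Ω : Type*} (m' : MeasurableSpace Ω) {m0 : MeasurableSpace Ω} (μ : Measure Ω)
    (s : Set Ω) : Ω → ℝ :=
  cexp m' μ (s.indicator fun _ => (1 : ℝ))

/-- `f` and `g` are conditionally independent given the σ-algebra `m'` under `μ` :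
conditional probabilities of joint events factorize. -/
def CondIndepFunGiven {Ω β γ : Type*} [MeasurableSpace β]
    [MeasurableSpace γ] (m' : MeasurableSpace Ω) {m0 : MeasurableSpace Ω}
    (f : Ω → β) (g : Ω → γ) (μ : Measure Ω) : Prop :=
  ∀ s u, MeasurableSet s → MeasurableSet u →
    cprob m' μ (f ⁻¹' s ∩ g ⁻¹' u)
      =ᵐ[μ] fun ω => cprob m' μ (f ⁻¹' s) ω * cprob m' μ (g ⁻¹' u) ω

/-!
Weighting by `R / λ₁` under `P` is integrating against `P[|R = 1]`. Under that measure, (A1)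
makes the treatment indicator `e = 1{T = t}`, of mean `π_{t1}`, independent of both `Y_t` and
`τ†(X)`. Hence `E[e Y_t / π_{t1}] = ν_t` and `E[(1 - e / π_{t1}) τ†(X)] = 0`, whatever `τ†` is.
-/

namespace ProbabilityTheory

variable {Ω : Type*}

theorem integral_div_measure_mul_eq_integral_cond [MeasurableSpace Ω] (μ : Measure Ω)
    {R : Ω → ℝ} (hR : Measurable R) (hRbin : ∀ ω, R ω = 0 ∨ R ω = 1) (g : Ω → ℝ) :
    ∫ ω, R ω / (μ {ω | R ω = 1}).toReal * g ω ∂μ = ∫ ω, g ω ∂μ[|{ω | R ω = 1}] := by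
  set s := {ω | R ω = 1}
  have hpointwise :
      ∀ ω, R ω / (μ s).toReal * g ω = s.indicator (fun ω ↦ (μ s).toReal⁻¹ * g ω) ω := by
    intro ω
    rcases hRbin ω with h | h
    · simp [s, h]
    · simp [s, h, div_eq_inv_mul]
  have hs : MeasurableSet s := hR (measurableSet_singleton 1)
  rw [integral_congr_ae (.of_forall hpointwise), integral_indicator hs,
    cond, integral_smul_measure, ENNReal.toReal_inv, integral_const_mul, smul_eq_mul]

theorem _root_.MeasureTheory.Integrable.cond [MeasurableSpace Ω] {E : Type*}
    [NormedAddCommGroup E] {μ : Measure Ω} {f : Ω → E} (hf : Integrable f μ) {s : Set Ω}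
    (hs : μ s ≠ 0) : Integrable f μ[|s] :=
  hf.restrict.smul_measure (ENNReal.inv_ne_top.mpr hs)

theorem le_measureReal_of_ae_le_cprob {m m0 : MeasurableSpace Ω} (hm : m ≤ m0) {μ : Measure Ω}
    [IsProbabilityMeasure μ] {s : Set Ω} (hs : MeasurableSet s) {ε : ℝ}
    (h : ∀ᵐ ω ∂μ, ε ≤ cprob m μ s ω) : ε ≤ μ.real s :=
  calc ε = ∫ _, ε ∂μ := by simp
    _ ≤ ∫ ω, cprob m μ s ω ∂μ := integral_mono_ae (integrable_const ε) integrable_condExp h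
    _ = ∫ ω, s.indicator (fun _ ↦ (1 : ℝ)) ω ∂μ := integral_condExp hm
    _ = μ.real s := by rw [integral_indicator_const _ hs, smul_eq_mul, mul_one]

theorem integral_aipw_sub_eq_zero [MeasurableSpace Ω] {μ : Measure Ω} [IsProbabilityMeasure μ]
    {e Y Z : Ω → ℝ} (he : Integrable e μ) (hY : Integrable Y μ) (hZ : Integrable Z μ)
    (heY : IndepFun e Y μ) (heZ : IndepFun e Z μ) {p : ℝ} (hep : ∫ ω, e ω ∂μ = p) (hp : p ≠ 0) :
    ∫ ω, e ω * Y ω / p + (1 - e ω / p) * Z ω - ∫ ω, Y ω ∂μ ∂μ = 0 := by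
  have heY_int : Integrable (fun ω ↦ e ω * Y ω) μ := heY.integrable_mul he hY
  have heZ_int : Integrable (fun ω ↦ e ω * Z ω) μ := heZ.integrable_mul he hZ
  have hIPW : Integrable (fun ω ↦ p⁻¹ * (e ω * Y ω)) μ := heY_int.const_mul _
  have hAug : Integrable (fun ω ↦ Z ω - p⁻¹ * (e ω * Z ω)) μ := hZ.sub (heZ_int.const_mul _)
  calc ∫ ω, e ω * Y ω / p + (1 - e ω / p) * Z ω - ∫ ω, Y ω ∂μ ∂μ
      = ∫ ω, p⁻¹ * (e ω * Y ω) + (Z ω - p⁻¹ * (e ω * Z ω)) - ∫ ω, Y ω ∂μ ∂μ := by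
        congr 1; funext ω; ring
    _ = p⁻¹ * ((∫ ω, e ω ∂μ) * ∫ ω, Y ω ∂μ)
          + (∫ ω, Z ω ∂μ - p⁻¹ * ((∫ ω, e ω ∂μ) * ∫ ω, Z ω ∂μ)) - ∫ ω, Y ω ∂μ := by
        rw [integral_sub (f := fun ω ↦ p⁻¹ * (e ω * Y ω) + (Z ω - p⁻¹ * (e ω * Z ω)))
            (hIPW.add hAug) (integrable_const _), integral_add hIPW hAug,
          integral_sub hZ (heZ_int.const_mul _), integral_const_mul,
          integral_const_mul, heY.integral_fun_mul_eq_mul_integral he.1 hY.1,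
          heZ.integral_fun_mul_eq_mul_integral he.1 hZ.1, integral_const, probReal_univ, one_smul]
    _ = 0 := by
        rw [hep]
        field_simp
        ring

theorem integral_ite_aipw_sub_eq_zero [MeasurableSpace Ω] {β γ : Type*} [MeasurableSpace β]
    [MeasurableSingletonClass β] [DecidableEq β] [MeasurableSpace γ] {μ : Measure Ω}
    [IsProbabilityMeasure μ] {T : Ω → β} {W : Ω → γ} (hT : Measurable T)
    (hTW : IndepFun T W μ) {t : β} (ht : μ.real {ω | T ω = t} ≠ 0) {φ ψ : γ → ℝ}
    (hφ : Measurable φ) (hψ : Measurable ψ)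
    (hφW : Integrable (fun ω ↦ φ (W ω)) μ) (hψW : Integrable (fun ω ↦ ψ (W ω)) μ) :
    ∫ ω, (if T ω = t then 1 else 0) * φ (W ω) / μ.real {ω | T ω = t}
      + (1 - (if T ω = t then 1 else 0) / μ.real {ω | T ω = t}) * ψ (W ω)
      - ∫ ω, φ (W ω) ∂μ ∂μ = 0 := by
  have hA : MeasurableSet {ω | T ω = t} := hT (measurableSet_singleton t)
  have he : (fun ω ↦ if T ω = t then (1 : ℝ) else 0) = {ω | T ω = t}.indicator 1 := by
    funext ω
    by_cases h : T ω = t <;> simp [h]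
  have he_meas : Measurable fun b : β ↦ if b = t then (1 : ℝ) else 0 :=
    measurable_const.ite (measurableSet_singleton t) measurable_const
  refine integral_aipw_sub_eq_zero (e := fun ω ↦ if T ω = t then 1 else 0)
    (he ▸ (integrable_const 1).indicator hA) hφW hψW (hTW.comp he_meas hφ) (hTW.comp he_meas hψ)
    ?_ ht
  rw [he, integral_indicator_one hA]

end ProbabilityTheory

theorem stmt13_general
    {Ω 𝒳 : Type*} [MeasurableSpace Ω] [MeasurableSpace 𝒳]
    (P : Measure Ω) [IsProbabilityMeasure P]
    (X : Ω → 𝒳) (R T Y₁ Y₀ Y : Ω → ℝ) (Yt : ℝ → Ω → ℝ)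
    (hX : Measurable X) (hR : Measurable R) (hT : Measurable T)
    (hRbin : ∀ ω, R ω = 0 ∨ R ω = 1)
    (hY₁2 : MemLp Y₁ 2 P) (hY₀2 : MemLp Y₀ 2 P)
    (hY : Y = fun ω => T ω * Y₁ ω + (1 - T ω) * Y₀ ω)
    (hYt1 : Yt 1 = Y₁) (hYt0 : Yt 0 = Y₀)
    (ε : ℝ) (hε : 0 < ε)
    (hlam_pos : 0 < P {ω | R ω = 1})
    (hpi : ∀ r ∈ ({0, 1} : Set ℝ), ∀ t ∈ ({0, 1} : Set ℝ), ∀ᵐ ω ∂P,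
      ε ≤ cprob (sigmaX X) (ProbabilityTheory.cond P {ω' | R ω' = r}) {ω' | T ω' = t} ω ∧
      cprob (sigmaX X) (ProbabilityTheory.cond P {ω' | R ω' = r}) {ω' | T ω' = t} ω ≤ 1 - ε)
    (hA1 : IndepFun T (fun ω => (Y₁ ω, Y₀ ω, X ω)) (ProbabilityTheory.cond P {ω | R ω = 1}))
    (t : ℝ) (ht : t = 0 ∨ t = 1)
    :
    ∀ τd : 𝒳 → ℝ, Measurable τd → (∃ C, ∀ x, |τd x| ≤ C) →
      ∫ ω, (R ω / (P {ω' | R ω' = 1}).toReal) * ((if T ω = t then (1 : ℝ) else 0) * Y ω / ((ProbabilityTheory.cond P {ω' | R ω' = 1}) {ω' | T ω' = t}).toReal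
        + (1 - (if T ω = t then (1 : ℝ) else 0) / ((ProbabilityTheory.cond P {ω' | R ω' = 1}) {ω' | T ω' = t}).toReal) * τd (X ω) - (∫ ω', Yt t ω' ∂(ProbabilityTheory.cond P {ω'' | R ω'' = 1}))) ∂P = 0 := by
  intro τd hτd ⟨C, hC⟩
  have hYt : Yt t = fun ω ↦ t * Y₁ ω + (1 - t) * Y₀ ω := by
    rcases ht with rfl | rfl <;> simp [hYt0, hYt1]
  have hY_obs :
      ∀ ω, (if T ω = t then (1 : ℝ) else 0) * Y ω = (if T ω = t then 1 else 0) * Yt t ω := by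
    intro ω
    by_cases h : T ω = t <;> simp [h, hY, hYt]
  rw [integral_div_measure_mul_eq_integral_cond P hR hRbin]
  simp only [hY_obs, hYt]
  set s := {ω | R ω = 1}
  have hs : P s ≠ 0 := hlam_pos.ne'
  have := cond_isProbabilityMeasure (μ := P) hs
  have hπ : ε ≤ P[|s].real {ω | T ω = t} := by
    refine le_measureReal_of_ae_le_cprob hX.comap_le (hT (measurableSet_singleton t))
      (cond_absolutelyContinuous.ae_le ?_)
    filter_upwards [hpi 1 (by simp) t (by rcases ht with rfl | rfl <;> simp)] with ω hω
    exact hω.1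
  refine integral_ite_aipw_sub_eq_zero hT hA1 (hε.trans_le hπ).ne'
    (φ := fun p : ℝ × ℝ × 𝒳 ↦ t * p.1 + (1 - t) * p.2.1) (ψ := fun p ↦ τd p.2.2)
    (by fun_prop) (by fun_prop) ?_ ?_
  · exact (((hY₁2.integrable one_le_two).const_mul t).add
      ((hY₀2.integrable one_le_two).const_mul (1 - t))).cond hs
  · exact .of_bound (hτd.comp hX).aestronglyMeasurable C (.of_forall fun ω ↦ hC (X ω))

theorem stmt13
    {Ω 𝒳 : Type*} [MeasurableSpace Ω] [MeasurableSpace 𝒳] [StandardBorelSpace 𝒳]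
    (P : Measure Ω) [IsProbabilityMeasure P]
    (X : Ω → 𝒳) (R T Y₁ Y₀ Y : Ω → ℝ) (Yt : ℝ → Ω → ℝ)
    (hX : Measurable X) (hR : Measurable R) (hT : Measurable T)
    (hY₁m : Measurable Y₁) (hY₀m : Measurable Y₀)
    (hRbin : ∀ ω, R ω = 0 ∨ R ω = 1) (hTbin : ∀ ω, T ω = 0 ∨ T ω = 1)
    (hY₁2 : MemLp Y₁ 2 P) (hY₀2 : MemLp Y₀ 2 P)
    (hY : Y = fun ω => T ω * Y₁ ω + (1 - T ω) * Y₀ ω)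
    (hYt1 : Yt 1 = Y₁) (hYt0 : Yt 0 = Y₀)
    (ε : ℝ) (hε : 0 < ε)
    (hlam_pos : 0 < P {ω | R ω = 1}) (hlam_lt : P {ω | R ω = 1} < 1)
    (hlamX : ∀ᵐ ω ∂P, ε ≤ cprob (sigmaX X) P {ω' | R ω' = 1} ω ∧
      cprob (sigmaX X) P {ω' | R ω' = 1} ω ≤ 1 - ε)
    (hpi : ∀ r ∈ ({0, 1} : Set ℝ), ∀ t ∈ ({0, 1} : Set ℝ), ∀ᵐ ω ∂P,
      ε ≤ cprob (sigmaX X) (ProbabilityTheory.cond P {ω' | R ω' = r}) {ω' | T ω' = t} ω ∧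
      cprob (sigmaX X) (ProbabilityTheory.cond P {ω' | R ω' = r}) {ω' | T ω' = t} ω ≤ 1 - ε)
    (hA1 : IndepFun T (fun ω => (Y₁ ω, Y₀ ω, X ω)) (ProbabilityTheory.cond P {ω | R ω = 1}))
    (t : ℝ) (ht : t = 0 ∨ t = 1)
    :
    ∀ τd : 𝒳 → ℝ, Measurable τd → (∃ C, ∀ x, |τd x| ≤ C) →
      ∫ ω, (R ω / (P {ω' | R ω' = 1}).toReal) * ((if T ω = t then (1 : ℝ) else 0) * Y ω / ((ProbabilityTheory.cond P {ω' | R ω' = 1}) {ω' | T ω' = t}).toReal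
        + (1 - (if T ω = t then (1 : ℝ) else 0) / ((ProbabilityTheory.cond P {ω' | R ω' = 1}) {ω' | T ω' = t}).toReal) * τd (X ω) - (∫ ω', Yt t ω' ∂(ProbabilityTheory.cond P {ω'' | R ω'' = 1}))) ∂P = 0 :=
  stmt13_general P X R T Y₁ Y₀ Y Yt hX hR hT hRbin hY₁2 hY₀2 hY hYt1 hYt0 ε hε hlam_pos hpi hA1 t ht
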